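/- arXiv:2511.06476 — 2 statements merged into one kernel-verified Lean document; each statement's English description precedes it below -/
import Mathlib

section
/- Let n ≥ 2, κ > 1, p̂ ∈ [0,1], and p ∈ (0,1). Then p lies in the interval [c − r, c + r] (with c, r as in the proposed CI) if and only if the quadratic inequality n(p̂ − p)²/(p(1−p)) − (p̂/p + (1−p̂)/(1−p) − 2) ≤ κ holds. -/
/-!
Multiplying the statistic by `p (1 - p) > 0` turns `χ² ≤ κ` into `Q(p) ≤ 0` for the quadratic
`Q(p) = (n + κ - 2) p² - (2 (n - 1) p̂ + κ - 1) p + p̂ (n p̂ - 1)`. Completing the square,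
`(n + κ - 2) Q(p) = ((n + κ - 2)(p - c))² - D` with `D = n κ p̂ q̂ + (κ - 1)² / 4 - p̂ q̂ ≥ 0`,
so `Q(p) ≤ 0` exactly when `|p - c| ≤ √D / (n + κ - 2) = r`.
-/

theorem sub_sqrt_div_le_and_le_add_sqrt_div_iff {a c D p : ℝ} (ha : 0 < a) (hD : 0 ≤ D) :
    (c - √D / a ≤ p ∧ p ≤ c + √D / a) ↔ (a * (p - c)) ^ 2 ≤ D := by
  have hlow : c - √D / a ≤ p ↔ -√D ≤ a * (p - c) := by
    rw [sub_le_comm, le_div_iff₀ ha]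
    constructor <;> intro h <;> linarith
  have hupp : p ≤ c + √D / a ↔ a * (p - c) ≤ √D := by
    rw [← sub_le_iff_le_add', le_div_iff₀ ha, mul_comm]
  rw [Real.sq_le hD, hlow, hupp]

def ciQuadratic (n κ phat p : ℝ) : ℝ :=
  (n + κ - 2) * p ^ 2 - (2 * (n - 1) * phat + (κ - 1)) * p + phat * (n * phat - 1)

theorem chiSq_le_iff_ciQuadratic_nonpos {n κ phat p : ℝ} (hp : 0 < p) (hp' : p < 1) :
    n * (phat - p) ^ 2 / (p * (1 - p)) - (phat / p + (1 - phat) / (1 - p) - 2) ≤ κ ↔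
      ciQuadratic n κ phat p ≤ 0 := by
  have hq : 0 < 1 - p := sub_pos.mpr hp'
  have hpq : 0 < p * (1 - p) := mul_pos hp hq
  have hstat : n * (phat - p) ^ 2 / (p * (1 - p)) - (phat / p + (1 - phat) / (1 - p) - 2) =
      κ + ciQuadratic n κ phat p / (p * (1 - p)) := by
    unfold ciQuadratic
    field_simp [hp.ne', hq.ne']
    ring
  rw [hstat, add_le_iff_nonpos_right, div_le_iff₀ hpq, zero_mul]

theorem sq_mul_sub_center_eq {n κ phat qhat c p : ℝ} (hq : qhat = 1 - phat)
    (hc : (n + κ - 2) * c = (n - 1) * phat + (κ - 1) / 2) :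
    ((n + κ - 2) * (p - c)) ^ 2 =
      (n * κ * phat * qhat + (κ - 1) ^ 2 / 4 - phat * qhat) +
        (n + κ - 2) * ciQuadratic n κ phat p := by
  unfold ciQuadratic
  subst hq
  linear_combination ((n + κ - 2) * c + ((n - 1) * phat + (κ - 1) / 2) - 2 * (n + κ - 2) * p) * hc

theorem stmt_4 (n : ℕ) (hn : 2 ≤ n) (κ : ℝ) (hκ : 1 < κ)
    (phat : ℝ) (hp0 : 0 ≤ phat) (hp1 : phat ≤ 1) (qhat : ℝ) (hq : qhat = 1 - phat)
    (p : ℝ) (hp : 0 < p) (hp' : p < 1) (c r : ℝ)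
    (hc : c = ((n - 1) * phat + (κ - 1) / 2) / (n + κ - 2))
    (hr : r = Real.sqrt (n * κ * phat * qhat + (κ - 1) ^ 2 / 4 - phat * qhat) / (n + κ - 2)) :
    (c - r ≤ p ∧ p ≤ c + r) ↔
      (n : ℝ) * (phat - p) ^ 2 / (p * (1 - p)) - (phat / p + (1 - phat) / (1 - p) - 2) ≤ κ := by
  have hn' : (2 : ℝ) ≤ n := by exact_mod_cast hn
  have hA : (0 : ℝ) < n + κ - 2 := by linarith
  have hD : 0 ≤ (n : ℝ) * κ * phat * qhat + (κ - 1) ^ 2 / 4 - phat * qhat := by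
    have hvar : 0 ≤ phat * qhat := mul_nonneg hp0 (by linarith)
    have hnκ : 0 ≤ (n : ℝ) * κ - 1 := by nlinarith
    nlinarith [mul_nonneg hnκ hvar, sq_nonneg (κ - 1)]
  have hcA : ((n : ℝ) + κ - 2) * c = (n - 1) * phat + (κ - 1) / 2 := by
    rw [hc, mul_div_cancel₀ _ hA.ne']
  rw [hr, sub_sqrt_div_le_and_le_add_sqrt_div_iff hA hD, sq_mul_sub_center_eq hq hcA,
    chiSq_le_iff_ciQuadratic_nonpos hp hp', add_le_iff_nonpos_right]
  exact ⟨fun h => nonpos_of_mul_nonpos_right h hA, mul_nonpos_of_nonneg_of_nonpos hA.le⟩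
end

section
/- The Agresti–Coull interval p̃ ± z√(p̃(1−p̃)/ñ), where p̃ = (np̂ + κ/2)/(n + κ), ñ = n + κ, κ = z², always contains the Wilson interval p̃ ± z√(n p̂ q̂ + κ/4)/(n + κ) with the same center; i.e., the Agresti–Coull half-width is at least the Wilson half-width, for all n ≥ 1, z > 0, p̂ ∈ [0,1]. -/
theorem stmt_15 (n : ℕ) (hn : 1 ≤ n) (z : ℝ) (hz : 0 < z)
    (phat : ℝ) (hp0 : 0 ≤ phat) (hp1 : phat ≤ 1) (qhat : ℝ) (hq : qhat = 1 - phat)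
    (κ : ℝ) (hκ : κ = z ^ 2) (ptilde : ℝ)
    (hpt : ptilde = ((n : ℝ) * phat + κ / 2) / (n + κ)) :
    z * Real.sqrt ((n : ℝ) * phat * qhat + κ / 4) / (n + κ)
      ≤ z * Real.sqrt (ptilde * (1 - ptilde) / (n + κ)) := by
  subst hq
  have hκ0 : 0 < κ := by rw [hκ]; positivity
  have hn0 : (1:ℝ) ≤ (n:ℝ) := by exact_mod_cast hn
  have hN : (0:ℝ) < (n:ℝ) + κ := by linarith
  have hA0 : (0:ℝ) ≤ (n : ℝ) * phat * (1 - phat) + κ / 4 := by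
    have h : 0 ≤ (1:ℝ) - phat := by linarith
    have : 0 ≤ (n:ℝ) * phat * (1 - phat) := by positivity
    linarith
  have key : ((n : ℝ) * phat * (1 - phat) + κ / 4) / ((n:ℝ) + κ)^2
      ≤ ptilde * (1 - ptilde) / ((n:ℝ) + κ) := by
    have h1 : 1 - ptilde = ((n:ℝ) * (1 - phat) + κ / 2) / ((n:ℝ) + κ) := by
      rw [hpt]; field_simp; ring
    rw [h1, hpt, div_mul_div_comm, div_div]
    rw [div_le_div_iff₀ (by positivity) (by positivity)]
    have hpq : phat * (1 - phat) ≤ 1/4 := by nlinarith [sq_nonneg (phat - 1/2)]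
    have hAN : ((n:ℝ) * phat * (1 - phat) + κ / 4) * ((n:ℝ) + κ)
        ≤ ((n:ℝ) * phat + κ / 2) * ((n:ℝ) * (1 - phat) + κ / 2) := by
      nlinarith [mul_le_mul_of_nonneg_left hpq (mul_pos hκ0 (lt_of_lt_of_le one_pos hn0)).le]
    nlinarith [mul_le_mul_of_nonneg_right hAN (sq_nonneg ((n:ℝ)+κ))]
  have hrw : z * Real.sqrt ((n : ℝ) * phat * (1 - phat) + κ / 4) / ((n:ℝ) + κ)
      = z * Real.sqrt (((n : ℝ) * phat * (1 - phat) + κ / 4) / ((n:ℝ) + κ)^2) := by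
    rw [Real.sqrt_div hA0, Real.sqrt_sq hN.le, mul_div_assoc]
  rw [hrw]
  exact mul_le_mul_of_nonneg_left (Real.sqrt_le_sqrt key) hz.le
end
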